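/- arXiv:1702.06943 — 4 statements merged into one kernel-verified Lean document; each statement's English description precedes it below -/
import Mathlib

section
/- Correctness of the dynamic-programming scan in Algorithm 3 (matrix times vector): if H : Fin N → ℝ satisfies H 0 = 0 and H i = (key i ⬝ᵥ v) + H (parent i) for every i ≠ 0, then H i = seq i ⬝ᵥ v for every node index i. -/
open Matrix

/-- The path from node `i` to the root (node `0`) of the prefix tree. -/
def pathToRoot {N : ℕ} [NeZero N] (parent : Fin N → Fin N)
    (hlt : ∀ i : Fin N, i ≠ 0 → parent i < i) (i : Fin N) : List (Fin N) :=
  if h : i = 0 then [0]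
  else i :: pathToRoot parent hlt (parent i)
  termination_by (i : ℕ)
  decreasing_by exact hlt i h

/-- The sequence represented by node `i`: the sum of the key vectors of all nodes
on the path from `i` to the root (inclusive). -/
noncomputable def seqOf {N m : ℕ} [NeZero N] (parent : Fin N → Fin N)
    (hlt : ∀ i : Fin N, i ≠ 0 → parent i < i)
    (key : Fin N → Fin m → ℝ) (i : Fin N) : Fin m → ℝ :=
  ((pathToRoot parent hlt i).map key).sum

/-- Correctness of the dynamic-programming scan in Algorithm 3 (matrix times vector):
if `H` satisfies the recurrence `H 0 = 0` and `H i = key i ⬝ᵥ v + H (parent i)` for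
`i ≠ 0`, then `H i = seq i ⬝ᵥ v` for every node `i`. -/
theorem dp_scan_matrix_times_vector {N m : ℕ} [NeZero N]
    (parent : Fin N → Fin N) (hparent0 : parent 0 = 0)
    (hlt : ∀ i : Fin N, i ≠ 0 → parent i < i)
    (key : Fin N → Fin m → ℝ) (hkey0 : key 0 = 0)
    (v : Fin m → ℝ) (H : Fin N → ℝ)
    (hH0 : H 0 = 0)
    (hHrec : ∀ i : Fin N, i ≠ 0 → H i = key i ⬝ᵥ v + H (parent i)) :
    ∀ i : Fin N, H i = seqOf parent hlt key i ⬝ᵥ v := by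
  intro i
  induction i using WellFoundedLT.induction with
  | _ i ih =>
    by_cases h : i = 0
    · subst h
      simp [seqOf, pathToRoot, hH0, hkey0]
    · rw [hHrec i h, ih (parent i) (hlt i h)]
      have hpath : pathToRoot parent hlt i = i :: pathToRoot parent hlt (parent i) := by
        rw [pathToRoot]; simp [h]
      simp [seqOf, hpath, add_dotProduct]
end

section
/- Left multiplication of a TOC-compressed matrix by a vector (Theorem 2): define G : Fin N → ℝ by G x = Σ_{i : Fin n} (v i) * (number of occurrences of x in the list D i). Then the row vector v ⬝ A (i.e., Matrix.vecMul v A) equals Σ_{x : Fin N} (G x) • seq x. (Since key 0 = 0, the x = 0 term vanishes, matching the paper's sum over x = 1, …, N−1.) -/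
open Matrix

lemma list_sum_eq {N : ℕ} {M : Type} [AddCommMonoid M] (l : List (Fin N)) (f : Fin N → M) :
    (l.map f).sum = ∑ x : Fin N, (l.count x) • f x := by
  induction l with
  | nil => simp
  | cons a t ih =>
    simp only [List.map_cons, List.sum_cons, ih, List.count_cons, add_smul]
    rw [Finset.sum_add_distrib]
    have : ∑ x : Fin N, (if (a == x) = true then 1 else 0) • f x = f a := by
      rw [Finset.sum_eq_single a]
      · simp
      · intro b _ hb
        have : ¬ (a = b) := fun h => hb h.symm
        simp [this]
      · simp
    rw [this]
    exact add_comm _ _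

/-- Theorem 2: left multiplication of a TOC-compressed matrix by a vector.
With `G x = Σᵢ v i * (count of x in D i)`, we have `v ⬝ A = Σₓ (G x) • seq x`. -/
theorem vecMul_eq_sum_count_smul_seq {N m n : ℕ} [NeZero N]
    (parent : Fin N → Fin N) (hparent0 : parent 0 = 0)
    (hlt : ∀ i : Fin N, i ≠ 0 → parent i < i)
    (key : Fin N → Fin m → ℝ) (hkey0 : key 0 = 0)
    (A : Matrix (Fin n) (Fin m) ℝ) (D : Fin n → List (Fin N))
    (hD : ∀ i : Fin n, A i = ((D i).map (seqOf parent hlt key)).sum)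
    (v : Fin n → ℝ)
    (G : Fin N → ℝ)
    (hG : ∀ x : Fin N, G x = ∑ i : Fin n, v i * ((D i).count x : ℝ)) :
    Matrix.vecMul v A = ∑ x : Fin N, G x • seqOf parent hlt key x := by
  funext j
  have hA : ∀ i : Fin n, A i j
      = ∑ x : Fin N, ((D i).count x : ℝ) * seqOf parent hlt key x j := by
    intro i
    have h1 := congrFun (hD i) j
    rw [h1]
    have h2 : ∀ l : List (Fin N), ((l.map (seqOf parent hlt key)).sum) j
        = ((l.map (fun x => seqOf parent hlt key x j)).sum) := by
      intro l
      induction l with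
      | nil => simp
      | cons a t ih => simp [ih]
    rw [h2 (D i), list_sum_eq]
    simp [nsmul_eq_mul]
  have hR : (∑ x : Fin N, G x • seqOf parent hlt key x) j
      = ∑ x : Fin N, G x * seqOf parent hlt key x j := by
    simp [Finset.sum_apply]
  rw [hR]
  have hL : Matrix.vecMul v A j = ∑ i : Fin n, v i * A i j := by
    simp [Matrix.vecMul, dotProduct]
  rw [hL]
  simp only [hA, hG, Finset.mul_sum, Finset.sum_mul]
  rw [Finset.sum_comm]
  apply Finset.sum_congr rfl
  intro x _
  apply Finset.sum_congr rfl
  intro i _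
  ring
end

section
/- Left multiplication of a TOC-compressed matrix by an uncompressed matrix (Appendix left-multiplication theorem): define 𝒢 : Fin N → (Fin p → ℝ) by 𝒢 x = fun k => Σ_{i : Fin n} (number of occurrences of x in D i) * M k i. Then the matrix product M * A equals Σ_{x : Fin N} Matrix.vecMulVec (𝒢 x) (seq x), the sum over all tree nodes of the outer product of 𝒢 x with the row vector seq x. (Since key 0 = 0, the x = 0 term vanishes, matching the paper's sum over x = 1, …, N−1.) -/
open Matrix

lemma list_sum_map_eq_sum_count {N : ℕ} (l : List (Fin N)) (f : Fin N → ℝ) :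
    (l.map f).sum = ∑ x : Fin N, (l.count x : ℝ) * f x := by
  rw [Finset.sum_list_map_count]
  rw [Finset.sum_subset (Finset.subset_univ l.toFinset)]
  · exact Finset.sum_congr rfl fun x _ => by simp [nsmul_eq_mul]
  · intro x _ hx
    simp [List.count_eq_zero_of_not_mem (by simpa using hx)]

/-- Appendix left-multiplication theorem: with
`𝒢 x k = Σᵢ (count of x in D i) * M k i`, we have
`M * A = Σₓ vecMulVec (𝒢 x) (seq x)`. -/
theorem uncompressedMatrix_mul_eq_sum_vecMulVec {N m n p : ℕ} [NeZero N]
    (parent : Fin N → Fin N) (hparent0 : parent 0 = 0)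
    (hlt : ∀ i : Fin N, i ≠ 0 → parent i < i)
    (key : Fin N → Fin m → ℝ) (hkey0 : key 0 = 0)
    (A : Matrix (Fin n) (Fin m) ℝ) (D : Fin n → List (Fin N))
    (hD : ∀ i : Fin n, A i = ((D i).map (seqOf parent hlt key)).sum)
    (M : Matrix (Fin p) (Fin n) ℝ)
    (G : Fin N → Fin p → ℝ)
    (hG : ∀ x : Fin N, G x = fun k => ∑ i : Fin n, ((D i).count x : ℝ) * M k i) :
    M * A = ∑ x : Fin N, Matrix.vecMulVec (G x) (seqOf parent hlt key x) := by
  ext k j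
  have hA : ∀ i : Fin n, A i j = ∑ x : Fin N,
      ((D i).count x : ℝ) * seqOf parent hlt key x j := by
    intro i
    have := congrFun (hD i) j
    rw [this]
    rw [show (((D i).map (seqOf parent hlt key)).sum) j
        = (((D i).map (fun y => seqOf parent hlt key y j)).sum) by
      induction D i with
      | nil => simp
      | cons a t ih => simp [ih]]
    exact list_sum_map_eq_sum_count _ _
  simp only [Matrix.mul_apply, Matrix.sum_apply, Matrix.vecMulVec_apply, hG, hA]
  simp only [Finset.mul_sum, Finset.sum_mul]
  rw [Finset.sum_comm]
  exact Finset.sum_congr rfl fun x _ => Finset.sum_congr rfl fun i _ => by ring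
end

section
/- Correctness of the dynamic-programming scan in Algorithm 7 (compressed matrix times uncompressed matrix): let M : Matrix (Fin m) (Fin p) ℝ. If H : Fin N → Fin p → ℝ satisfies H 0 = 0 and H i j = (key i ⬝ᵥ (fun r => M r j)) + H (parent i) j for every i ≠ 0 and every j, then H i j = seq i ⬝ᵥ (fun r => M r j) for every node index i and column j; that is, H i = Matrix.vecMul (seq i) M. -/
open Matrix

/-- Correctness of the dynamic-programming scan in Algorithm 7 (compressed matrix
times uncompressed matrix): if `H` satisfies the columnwise recurrence, then
`H i = (seq i) ⬝ M` for every node `i`. -/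
theorem dp_scan_matrix_times_matrix {N m p : ℕ} [NeZero N]
    (parent : Fin N → Fin N) (hparent0 : parent 0 = 0)
    (hlt : ∀ i : Fin N, i ≠ 0 → parent i < i)
    (key : Fin N → Fin m → ℝ) (hkey0 : key 0 = 0)
    (M : Matrix (Fin m) (Fin p) ℝ) (H : Fin N → Fin p → ℝ)
    (hH0 : H 0 = 0)
    (hHrec : ∀ i : Fin N, i ≠ 0 → ∀ j : Fin p,
      H i j = (key i ⬝ᵥ fun r => M r j) + H (parent i) j) :
    ∀ i : Fin N, H i = Matrix.vecMul (seqOf parent hlt key i) M := by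
  suffices hmain : ∀ n : ℕ, ∀ i : Fin N, (i : ℕ) = n →
      H i = Matrix.vecMul (seqOf parent hlt key i) M by
    intro i; exact hmain i i rfl
  intro n
  induction n using Nat.strong_induction_on with
  | _ n ih =>
  intro i hi
  subst hi
  by_cases h : i = 0
  · subst h
    funext j
    rw [hH0]
    simp [seqOf, pathToRoot, hkey0, Matrix.vecMul, dotProduct]
  · funext j
    rw [hHrec i h j]
    have : H (parent i) = Matrix.vecMul (seqOf parent hlt key (parent i)) M :=
      ih _ (hlt i h) (parent i) rfl
    rw [this]
    have hseq : seqOf parent hlt key i = key i + seqOf parent hlt key (parent i) := by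
      unfold seqOf
      rw [pathToRoot]
      simp [h]
    rw [hseq]
    simp [Matrix.vecMul, dotProduct, add_mul, Finset.sum_add_distrib]
end
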